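/- arXiv:1610.00032 — 5 statements merged into one kernel-verified Lean document; each statement's English description precedes it below -/
import Mathlib

section
/- Let X₁,…,Xₙ be i.i.d. random variables taking values in a measurable space S, and let f : S × S → ℝᵈ be a symmetric measurable kernel with E|f_m(X₁,X₂)| < ∞ for each coordinate m. Let Uₙ = [n(n-1)]⁻¹ Σ_{1≤i≠j≤n} f(Xᵢ,Xⱼ) and let m = ⌊n/2⌋. Then E|Uₙ - E Uₙ|_∞ ≤ (1/m) E|Σ_{i=1}^{m} [f(Xᵢ, X_{i+m}) - E f(X₁,X₂)]|_∞, where |·|_∞ denotes the coordinatewise maximum absolute value. -/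
/-!
For distinct positions `a ≠ b`, averaging `f (X (σ a)) (X (σ b))` over all permutations `σ` of
`{0, …, n - 1}` gives the U-statistic, because every ordered pair of distinct indices is hit equally
often. Hence `Uₙ - θ` is the average over `σ` of the block means
`m⁻¹ ∑ t < m, (f (X (σ t)) (X (σ (t + m))) - θ)`, each a mean of independent terms. The triangle
inequality for the sup norm bounds `E |Uₙ - θ|_∞` by the average of the expected norms of these
block means, and all of them equal the one for `σ = id` since the sample is i.i.d.
-/

open MeasureTheory ProbabilityTheory

section PermutationAverage

open Finset Equiv

variable {α E : Type*} [Fintype α]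

theorem sum_perm_apply_pair_eq [DecidableEq α] [AddCommMonoid E] (G : α → α → E) {a b c d : α}
    (hab : a ≠ b) (hcd : c ≠ d) : ∑ σ : Perm α, G (σ a) (σ b) = ∑ σ : Perm α, G (σ c) (σ d) := by
  obtain ⟨π, hπc, hπd⟩ :=
    MulAction.is_two_pretransitive_iff.mp (Perm.isMultiplyPretransitive α 2) hcd hab
  exact Fintype.sum_equiv (Equiv.mulRight π) _ _ fun σ => by
    simp only [Equiv.coe_mulRight, Perm.mul_apply, ← hπc, ← hπd, Perm.smul_def]

theorem sum_offDiag_perm_apply [AddCommMonoid E] (G : α → α → E) (σ : Perm α) :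
    ∑ p ∈ univ.offDiag, G (σ p.1) (σ p.2) = ∑ p ∈ univ.offDiag, G p.1 p.2 :=
  sum_nbij' (fun p => (σ p.1, σ p.2)) (fun p => (σ⁻¹ p.1, σ⁻¹ p.2)) (by simp) (by simp)
    (by simp) (by simp) (by simp)

theorem card_offDiag_nsmul_sum_perm [DecidableEq α] [AddCommMonoid E] (G : α → α → E) {a b : α}
    (hab : a ≠ b) :
    #(univ : Finset α).offDiag • ∑ σ : Perm α, G (σ a) (σ b)
      = (Fintype.card α).factorial • ∑ p ∈ univ.offDiag, G p.1 p.2 := by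
  calc #(univ : Finset α).offDiag • ∑ σ : Perm α, G (σ a) (σ b)
      = ∑ p ∈ univ.offDiag, ∑ σ : Perm α, G (σ p.1) (σ p.2) := by
        rw [← sum_const]
        exact sum_congr rfl fun p hp => sum_perm_apply_pair_eq G hab (mem_offDiag.1 hp).2.2
    _ = ∑ σ : Perm α, ∑ p ∈ univ.offDiag, G (σ p.1) (σ p.2) := sum_comm
    _ = (Fintype.card α).factorial • ∑ p ∈ univ.offDiag, G p.1 p.2 := by
        simp only [sum_offDiag_perm_apply, sum_const, card_univ, Fintype.card_perm]

theorem inv_factorial_smul_sum_perm [DecidableEq α] [AddCommGroup E] [Module ℝ E]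
    (G : α → α → E) {a b : α} (hab : a ≠ b) :
    ((Fintype.card α).factorial : ℝ)⁻¹ • ∑ σ : Perm α, G (σ a) (σ b)
      = ((Fintype.card α : ℝ) * (Fintype.card α - 1))⁻¹ • ∑ p ∈ univ.offDiag, G p.1 p.2 := by
  have hcard : (#(univ : Finset α).offDiag : ℝ) = Fintype.card α * (Fintype.card α - 1) := by
    rw [offDiag_card, card_univ, Nat.cast_sub (Nat.le_mul_self _)]
    push_cast
    ring
  have hN : (#(univ : Finset α).offDiag : ℝ) ≠ 0 :=
    Nat.cast_ne_zero.2 (card_ne_zero.2 ⟨(a, b), by simp [hab]⟩)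
  have h := congrArg
    (((Fintype.card α).factorial : ℝ)⁻¹ • (#(univ : Finset α).offDiag : ℝ)⁻¹ • ·)
    (card_offDiag_nsmul_sum_perm G hab)
  have hF : ((Fintype.card α).factorial : ℝ) ≠ 0 := Nat.cast_ne_zero.2 (Nat.factorial_ne_zero _)
  simp only [← Nat.cast_smul_eq_nsmul ℝ, smul_smul, inv_mul_cancel₀ hN, mul_left_comm _ _
    ((Fintype.card α).factorial : ℝ), inv_mul_cancel₀ hF, mul_one] at h
  rwa [← hcard]

theorem smul_sum_offDiag_sub_eq_perm_average [DecidableEq α] [AddCommGroup E] [Module ℝ E]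
    {ι : Type*} [Fintype ι] [Nonempty ι] (G : α → α → E) (θ : E) {e₁ e₂ : ι → α}
    (he : ∀ t, e₁ t ≠ e₂ t) :
    ((Fintype.card α : ℝ) * (Fintype.card α - 1))⁻¹ • ∑ p ∈ univ.offDiag, G p.1 p.2 - θ
      = ((Fintype.card α).factorial : ℝ)⁻¹ • ∑ σ : Perm α,
          (Fintype.card ι : ℝ)⁻¹ • ∑ t, (G (σ (e₁ t)) (σ (e₂ t)) - θ) := by
  set A := ((Fintype.card α : ℝ) * (Fintype.card α - 1))⁻¹ • ∑ p ∈ univ.offDiag, G p.1 p.2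
  have hblock : ∀ t,
      ((Fintype.card α).factorial : ℝ)⁻¹ • ∑ σ : Perm α, (G (σ (e₁ t)) (σ (e₂ t)) - θ) = A - θ :=
    fun t => by
    rw [sum_sub_distrib, smul_sub, inv_factorial_smul_sum_perm G (he t), sum_const, card_univ,
      Fintype.card_perm, ← Nat.cast_smul_eq_nsmul ℝ, smul_smul,
      inv_mul_cancel₀ (Nat.cast_ne_zero.2 (Nat.factorial_ne_zero _)), one_smul]
  rw [← smul_sum, smul_comm, sum_comm, smul_sum]
  simp only [hblock, sum_const, card_univ, ← Nat.cast_smul_eq_nsmul ℝ, smul_smul]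
  rw [inv_mul_cancel₀ (Nat.cast_ne_zero.2 Fintype.card_ne_zero), one_smul]

theorem norm_smul_sum_offDiag_sub_le [DecidableEq α] [SeminormedAddCommGroup E] [NormedSpace ℝ E]
    {ι : Type*} [Fintype ι] [Nonempty ι] (G : α → α → E) (θ : E) {e₁ e₂ : ι → α}
    (he : ∀ t, e₁ t ≠ e₂ t) :
    ‖((Fintype.card α : ℝ) * (Fintype.card α - 1))⁻¹ • ∑ p ∈ univ.offDiag, G p.1 p.2 - θ‖
      ≤ ((Fintype.card α).factorial : ℝ)⁻¹ * ∑ σ : Perm α,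
          ‖(Fintype.card ι : ℝ)⁻¹ • ∑ t, (G (σ (e₁ t)) (σ (e₂ t)) - θ)‖ := by
  rw [smul_sum_offDiag_sub_eq_perm_average G θ he]
  refine (norm_smul_le _ _).trans ?_
  rw [Real.norm_of_nonneg (by positivity)]
  exact mul_le_mul_of_nonneg_left (norm_sum_le _ _) (by positivity)

end PermutationAverage

theorem integral_le_of_le_average_of_identDistrib {Ω κ : Type*} [MeasurableSpace Ω]
    {μ : Measure Ω} [Fintype κ] {g : Ω → ℝ} {Z : κ → Ω → ℝ} {k₀ : κ} (hg : 0 ≤ᵐ[μ] g)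
    (hZ : ∀ k, IdentDistrib (Z k) (Z k₀) μ μ) (hint : Integrable (Z k₀) μ)
    (hle : ∀ᵐ ω ∂μ, g ω ≤ (Fintype.card κ : ℝ)⁻¹ * ∑ k, Z k ω) :
    ∫ ω, g ω ∂μ ≤ ∫ ω, Z k₀ ω ∂μ := by
  have hZint : ∀ k, Integrable (Z k) μ := fun k => (hZ k).integrable_iff.2 hint
  calc ∫ ω, g ω ∂μ ≤ ∫ ω, (Fintype.card κ : ℝ)⁻¹ * ∑ k, Z k ω ∂μ :=
        integral_mono_of_nonneg hg ((integrable_finsetSum _ fun k _ => hZint k).const_mul _) hle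
    _ = (Fintype.card κ : ℝ)⁻¹ * ∑ k, ∫ ω, Z k ω ∂μ := by
        rw [integral_const_mul, integral_finsetSum _ fun k _ => hZint k]
    _ = ∫ ω, Z k₀ ω ∂μ := by
        simp only [(hZ _).integral_eq, Finset.sum_const, Finset.card_univ, nsmul_eq_mul]
        rw [← mul_assoc, inv_mul_cancel₀ (Nat.cast_ne_zero.2 (Fintype.card_pos_iff.2 ⟨k₀⟩).ne'),
          one_mul]

section Sample

variable {Ω S ι : Type*} [MeasurableSpace Ω] [MeasurableSpace S] {μ : Measure Ω}
  {X : ι → Ω → S} {i₀ : ι}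

theorem identDistrib_pi_comp_of_injective {κ : Type*} [Fintype κ] (hmeas : ∀ i, Measurable (X i))
    (hindep : iIndepFun X μ) (hident : ∀ i, IdentDistrib (X i) (X i₀) μ μ) {g g' : κ → ι}
    (hg : g.Injective) (hg' : g'.Injective) :
    IdentDistrib (fun ω t => X (g t) ω) (fun ω t => X (g' t) ω) μ μ where
  aemeasurable_fst := (measurable_pi_lambda _ fun _ => hmeas _).aemeasurable
  aemeasurable_snd := (measurable_pi_lambda _ fun _ => hmeas _).aemeasurable
  map_eq := by
    rw [(hindep.precomp hg).map_fun_eq_pi_map fun _ => (hmeas _).aemeasurable,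
      (hindep.precomp hg').map_fun_eq_pi_map fun _ => (hmeas _).aemeasurable]
    simp only [(hident _).map_eq]

theorem identDistrib_pair (hmeas : ∀ i, Measurable (X i)) (hindep : iIndepFun X μ)
    (hident : ∀ i, IdentDistrib (X i) (X i₀) μ μ) {a b c d : ι} (hab : a ≠ b) (hcd : c ≠ d) :
    IdentDistrib (fun ω => (X a ω, X b ω)) (fun ω => (X c ω, X d ω)) μ μ :=
  (identDistrib_pi_comp_of_injective hmeas hindep hident (g := ![a, b]) (g' := ![c, d])
    (by simpa [Fin.cons_injective_iff] using hab)
    (by simpa [Fin.cons_injective_iff] using hcd)).comp (u := fun v => (v 0, v 1)) (by fun_prop)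

theorem integrable_apply_pair_of_ne {E : Type*} [NormedAddCommGroup E] [MeasurableSpace E]
    [BorelSpace E] {F : S → S → E}
    (hF : Measurable fun q : S × S => F q.1 q.2) (hmeas : ∀ i, Measurable (X i))
    (hindep : iIndepFun X μ) (hident : ∀ i, IdentDistrib (X i) (X i₀) μ μ) {a b c d : ι}
    (hcd : c ≠ d) (hint : Integrable (fun ω => F (X c ω) (X d ω)) μ) (hab : a ≠ b) :
    Integrable (fun ω => F (X a ω) (X b ω)) μ :=
  ((identDistrib_pair hmeas hindep hident hab hcd).comp hF).integrable_iff.2 hint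

theorem integral_le_of_le_perm_average {κ : Type*} [Fintype κ] [DecidableEq κ]
    (hmeas : ∀ i, Measurable (X i)) (hindep : iIndepFun X μ)
    (hident : ∀ i, IdentDistrib (X i) (X i₀) μ μ) {e : κ → ι} (he : e.Injective)
    {H : (κ → S) → ℝ} (hH : Measurable H) (hint : Integrable (fun ω => H fun i => X (e i) ω) μ)
    {g : Ω → ℝ} (hg : 0 ≤ᵐ[μ] g)
    (hle : ∀ᵐ ω ∂μ, g ω ≤ (Fintype.card (Equiv.Perm κ) : ℝ)⁻¹ *
      ∑ σ : Equiv.Perm κ, H fun i => X (e (σ i)) ω) :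
    ∫ ω, g ω ∂μ ≤ ∫ ω, H (fun i => X (e i) ω) ∂μ :=
  integral_le_of_le_average_of_identDistrib (k₀ := 1) hg
    (fun σ => (identDistrib_pi_comp_of_injective hmeas hindep hident (he.comp σ.injective)
      (he.comp (1 : Equiv.Perm κ).injective)).comp hH) hint hle

end Sample

theorem iSup_abs_eq_norm {ι : Type*} [Fintype ι] (v : ι → ℝ) : ⨆ k, |v k| = ‖v‖ :=
  le_antisymm (Real.iSup_le (fun k => norm_le_pi_norm v k) (norm_nonneg v))
    ((pi_norm_le_iff_of_nonneg (Real.iSup_nonneg fun k => abs_nonneg (v k))).2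
      fun k => le_ciSup (f := fun k => |v k|) (Set.finite_range _).bddAbove k)

open Finset in
theorem iSup_abs_sum_range_eq_norm {ι : Type*} [Fintype ι] (m : ℕ) (g : ℕ → ι → ℝ) :
    ⨆ k, |∑ i ∈ range m, g i k| = ‖∑ t : Fin m, g t‖ := by
  rw [← iSup_abs_eq_norm]
  simp only [Finset.sum_apply, Finset.sum_range]

open Finset in
theorem sum_range_sum_range_ite_ne {E : Type*} [AddCommMonoid E] (n : ℕ) (g : ℕ → ℕ → E) :
    ∑ i ∈ range n, ∑ j ∈ range n, (if i ≠ j then g i j else 0)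
      = ∑ p ∈ (univ : Finset (Fin n)).offDiag, g p.1 p.2 := by
  rw [sum_finset_product' _ univ (fun i => univ.filter (i ≠ ·)) (by simp [mem_offDiag])
    (f := fun i j : Fin n => g i j)]
  simp only [sum_filter, ← Fin.val_inj.not, sum_range]

open Finset in
theorem iSup_abs_mul_sum_ite_sub_eq_norm {ι : Type*} [Fintype ι] (n : ℕ) (c : ℝ)
    (g : ℕ → ℕ → ι → ℝ) (θ : ι → ℝ) :
    ⨆ k, |c * (∑ i ∈ range n, ∑ j ∈ range n, if i ≠ j then g i j k else 0) - θ k|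
      = ‖c • ∑ p ∈ (univ : Finset (Fin n)).offDiag, g p.1 p.2 - θ‖ := by
  rw [← iSup_abs_eq_norm, ← sum_range_sum_range_ite_ne]
  simp only [Pi.sub_apply, Pi.smul_apply, smul_eq_mul, Finset.sum_apply, ite_apply, Pi.zero_apply]

theorem stmt1_general {Ω S : Type*} [MeasureSpace Ω] [IsProbabilityMeasure (ℙ : Measure Ω)]
    [MeasurableSpace S] {n d : ℕ} (hn : 2 ≤ n)
    (X : ℕ → Ω → S) (hmeas : ∀ i, Measurable (X i))
    (hindep : iIndepFun X ℙ)
    (hident : ∀ i, IdentDistrib (X i) (X 0) ℙ ℙ)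
    (f : S → S → Fin d → ℝ)
    (hfmeas : ∀ k, Measurable (fun q : S × S => f q.1 q.2 k))
    (hint : ∀ k, Integrable (fun ω => f (X 0 ω) (X 1 ω) k) ℙ)
    (θ : Fin d → ℝ) :
    (∫ ω, ⨆ k : Fin d,
        |((n : ℝ) * ((n : ℝ) - 1))⁻¹ * (∑ i ∈ Finset.range n, ∑ j ∈ Finset.range n,
            if i ≠ j then f (X i ω) (X j ω) k else 0) - θ k| ∂ℙ)
      ≤ ((n / 2 : ℕ) : ℝ)⁻¹ *
        ∫ ω, ⨆ k : Fin d,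
          |∑ i ∈ Finset.range (n / 2), (f (X i ω) (X (i + n / 2) ω) k - θ k)| ∂ℙ := by
  set m := n / 2
  have : Nonempty (Fin m) := ⟨⟨0, by omega⟩⟩
  let e₁ : Fin m → Fin n := fun t => ⟨t, by omega⟩
  let e₂ : Fin m → Fin n := fun t => ⟨t + m, by omega⟩
  have he : ∀ t, e₁ t ≠ e₂ t := fun t => by simp only [e₁, e₂, ne_eq, Fin.ext_iff]; omega
  have hf : Measurable (fun q : S × S => f q.1 q.2) := measurable_pi_iff.2 hfmeas
  let H : (Fin n → S) → ℝ := fun v => ‖(m : ℝ)⁻¹ • ∑ t, (f (v (e₁ t)) (v (e₂ t)) - θ)‖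
  have hH : Measurable H := by
    have hfv : ∀ a b : Fin n, Measurable fun v : Fin n → S => f (v a) (v b) := fun a b =>
      hf.comp (f := fun v : Fin n → S => (v a, v b)) (by fun_prop)
    fun_prop
  have hint_block : Integrable (fun ω => H fun i => X i ω) ℙ :=
    (integrable_finsetSum Finset.univ fun t _ =>
      (integrable_apply_pair_of_ne hf hmeas hindep hident zero_ne_one (integrable_pi_iff.2 hint)
        (Fin.val_injective.ne (he t))).sub (integrable_const θ)).smul ((m : ℝ)⁻¹) |>.norm
  refine (integral_le_of_le_perm_average hmeas hindep hident Fin.val_injective hH hint_block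
    (ae_of_all _ fun ω => Real.iSup_nonneg fun k => abs_nonneg _)
    (ae_of_all _ fun ω => ?_)).trans_eq ?_
  · have h := norm_smul_sum_offDiag_sub_le (fun i j : Fin n => f (X i ω) (X j ω)) θ he
    simp only [Fintype.card_fin] at h
    rw [iSup_abs_mul_sum_ite_sub_eq_norm n _ (fun i j => f (X i ω) (X j ω)), Fintype.card_perm,
      Fintype.card_fin]
    exact h
  · rw [← integral_const_mul]
    refine integral_congr_ae (ae_of_all _ fun ω => ?_)
    change ‖(m : ℝ)⁻¹ • ∑ t, (f (X (e₁ t) ω) (X (e₂ t) ω) - θ)‖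
      = (m : ℝ)⁻¹ * ⨆ k, |∑ i ∈ Finset.range m, (f (X i ω) (X (i + m) ω) - θ) k|
    rw [iSup_abs_sum_range_eq_norm, norm_smul, Real.norm_of_nonneg (by positivity)]

/-- Data-splitting bound for U-statistics: for an i.i.d. sample `X₁,…,Xₙ` and a symmetric
integrable kernel `f : S × S → ℝᵈ`, with `Uₙ = [n(n-1)]⁻¹ Σ_{i≠j} f(Xᵢ,Xⱼ)`, `θ = E f(X₁,X₂)`
(`= E Uₙ`) and `m = ⌊n/2⌋`, one has
`E |Uₙ - E Uₙ|_∞ ≤ m⁻¹ E |Σ_{i<m} (f(Xᵢ, X_{i+m}) - θ)|_∞`. -/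
theorem stmt1 {Ω S : Type*} [MeasureSpace Ω] [IsProbabilityMeasure (ℙ : Measure Ω)]
    [MeasurableSpace S] {n d : ℕ} (hn : 2 ≤ n)
    (X : ℕ → Ω → S) (hmeas : ∀ i, Measurable (X i))
    (hindep : iIndepFun X ℙ)
    (hident : ∀ i, IdentDistrib (X i) (X 0) ℙ ℙ)
    (f : S → S → Fin d → ℝ)
    (hfmeas : ∀ k, Measurable (fun q : S × S => f q.1 q.2 k))
    (hsym : ∀ x₁ x₂, f x₁ x₂ = f x₂ x₁)
    (hint : ∀ k, Integrable (fun ω => f (X 0 ω) (X 1 ω) k) ℙ)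
    (θ : Fin d → ℝ) (hθ : ∀ k, θ k = ∫ ω, f (X 0 ω) (X 1 ω) k ∂ℙ) :
    (∫ ω, ⨆ k : Fin d,
        |((n : ℝ) * ((n : ℝ) - 1))⁻¹ * (∑ i ∈ Finset.range n, ∑ j ∈ Finset.range n,
            if i ≠ j then f (X i ω) (X j ω) k else 0) - θ k| ∂ℙ)
      ≤ ((n / 2 : ℕ) : ℝ)⁻¹ *
        ∫ ω, ⨆ k : Fin d,
          |∑ i ∈ Finset.range (n / 2), (f (X i ω) (X (i + n / 2) ω) k - θ k)| ∂ℙ :=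
  stmt1_general hn X hmeas hindep hident f hfmeas hint θ
end

section
/- Let X₁,…,Xₙ be independent random variables taking values in a measurable space S and let X'₁,…,X'ₙ be an independent copy. Let h : S × S → ℝᵈ be a symmetric and non-negative measurable kernel (h(x₁,x₂) = h(x₂,x₁) and h(x₁,x₂) ≥ 0 for all x₁,x₂). Then E[max_{1≤m≤d} max_{1≤i≠j≤n} h_m(Xᵢ, X'ⱼ)] ≤ 4 E[max_{1≤m≤d} max_{1≤i≠j≤n} h_m(Xᵢ, Xⱼ)]. -/
/-!
For `T ⊆ ι` let `V_T` take the copy `X'ᵢ` at `i ∈ T` and `Xᵢ` elsewhere; by independence `V_T`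
has the law of `X`. A pair `i ≠ j` has `i ∉ T ∋ j` for exactly `2^(n-2)` of the `2^n` sets `T`,
and then `h(Xᵢ, X'ⱼ) = h(V_T i, V_T j)`. Hence, pointwise, `2^(n-2)` times the decoupled maximum
is at most `∑_T max_{i≠j} h(V_T i, V_T j)`, and taking expectations gives the factor
`2^n / 2^(n-2) = 4`.
-/

open MeasureTheory ProbabilityTheory Finset

section Counting

variable {ι : Type*} [Fintype ι] [DecidableEq ι]

theorem card_filter_notMem_and_mem {i j : ι} (hij : i ≠ j) :
    #{T : Finset ι | i ∉ T ∧ j ∈ T} = 2 ^ (Fintype.card ι - 2) := by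
  have hbij : #{T : Finset ι | i ∉ T ∧ j ∈ T} = #(univ \ {i, j}).powerset := by
    refine card_nbij' (·.erase j) (insert j) ?_ ?_ ?_ ?_ <;> intro T hT <;>
      simp only [mem_coe, mem_filter, mem_univ, true_and, mem_powerset, subset_iff, mem_sdiff,
        mem_insert, mem_singleton] at hT ⊢
    · grind
    · grind
    · exact insert_erase hT.2
    · exact erase_insert fun hj => hT hj (.inr rfl)
  rw [hbij, card_powerset, card_univ_sdiff, card_pair hij]

end Counting

section OffDiagSup

variable {S ι κ : Type*} (h : S → S → κ → ℝ)

noncomputable def offDiagSup (x y : ι → S) : ℝ :=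
  ⨆ m, ⨆ i, ⨆ j, ⨆ _ : i ≠ j, h (x i) (y j) m

variable {h}

theorem offDiagSup_nonneg (hnonneg : ∀ x y m, 0 ≤ h x y m) (x y : ι → S) :
    0 ≤ offDiagSup h x y :=
  Real.iSup_nonneg fun _ => Real.iSup_nonneg fun _ => Real.iSup_nonneg fun _ =>
    Real.iSup_nonneg fun _ => hnonneg _ _ _

theorem offDiagSup_le {x y : ι → S} {a : ℝ} (ha : 0 ≤ a)
    (hle : ∀ m i j, i ≠ j → h (x i) (y j) m ≤ a) : offDiagSup h x y ≤ a :=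
  Real.iSup_le (fun m => Real.iSup_le (fun i => Real.iSup_le (fun j =>
    Real.iSup_le (hle m i j) ha) ha) ha) ha

theorem le_offDiagSup [Finite ι] [Finite κ] (x y : ι → S) (m : κ) {i j : ι} (hij : i ≠ j) :
    h (x i) (y j) m ≤ offDiagSup h x y :=
  le_ciSup_of_le (Set.finite_range _).bddAbove m <|
    le_ciSup_of_le (Set.finite_range _).bddAbove i <|
      le_ciSup_of_le (Set.finite_range _).bddAbove j <|
        (ciSup_pos (f := fun _ => h (x i) (y j) m) hij).ge

theorem measurable_offDiagSup_self [MeasurableSpace S] [Countable ι] [Countable κ]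
    (hmeas : ∀ m, Measurable fun q : S × S => h q.1 q.2 m) :
    Measurable fun x : ι → S => offDiagSup h x x :=
  .iSup fun m => .iSup fun i => .iSup fun j => .iSup_Prop _ <|
    (hmeas m).comp (f := fun x : ι → S => (x i, x j))
      ((measurable_pi_apply i).prodMk (measurable_pi_apply j))

end OffDiagSup

section Decoupling

variable {S ι κ : Type*} [Fintype ι] [DecidableEq ι] [Finite κ] {h : S → S → κ → ℝ}

theorem two_pow_mul_offDiagSup_le_sum_piecewise (hnonneg : ∀ x y m, 0 ≤ h x y m)
    (x y : ι → S) :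
    (2 : ℝ) ^ (Fintype.card ι - 2) * offDiagSup h x y ≤
      ∑ T : Finset ι, offDiagSup h (T.piecewise y x) (T.piecewise y x) := by
  have hsum : 0 ≤ ∑ T : Finset ι, offDiagSup h (T.piecewise y x) (T.piecewise y x) :=
    sum_nonneg fun T _ => offDiagSup_nonneg hnonneg _ _
  have hpow : (0 : ℝ) < 2 ^ (Fintype.card ι - 2) := by positivity
  rw [← le_div_iff₀' hpow]
  refine offDiagSup_le (div_nonneg hsum hpow.le) fun m i j hij => ?_
  rw [le_div_iff₀' hpow]
  calc (2 : ℝ) ^ (Fintype.card ι - 2) * h (x i) (y j) m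
      = ∑ T : Finset ι with i ∉ T ∧ j ∈ T, h (T.piecewise y x i) (T.piecewise y x j) m := by
        rw [sum_congr rfl fun T hT => by
          rw [piecewise_eq_of_notMem _ _ _ (mem_filter.1 hT).2.1,
            piecewise_eq_of_mem _ _ _ (mem_filter.1 hT).2.2],
          sum_const, card_filter_notMem_and_mem hij, nsmul_eq_mul]
        push_cast
        rfl
    _ ≤ ∑ T : Finset ι with i ∉ T ∧ j ∈ T, offDiagSup h (T.piecewise y x) (T.piecewise y x) :=
        sum_le_sum fun T _ => le_offDiagSup (T.piecewise y x) (T.piecewise y x) m hij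
    _ ≤ ∑ T : Finset ι, offDiagSup h (T.piecewise y x) (T.piecewise y x) :=
        sum_le_sum_of_subset_of_nonneg (filter_subset _ _)
          fun T _ _ => offDiagSup_nonneg hnonneg _ _

variable {Ω : Type*} [MeasurableSpace Ω] [MeasurableSpace S] {μ : Measure Ω}
  {Z : ι ⊕ ι → Ω → S}

theorem identDistrib_piecewise (hindep : iIndepFun Z μ)
    (hident : ∀ i, IdentDistrib (Z (.inl i)) (Z (.inr i)) μ μ) (T : Finset ι) :
    IdentDistrib (fun ω => T.piecewise (fun i => Z (.inr i) ω) (fun i => Z (.inl i) ω))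
      (fun ω i => Z (.inl i) ω) μ μ := by
  have hinj : Function.Injective (T.piecewise Sum.inr Sum.inl : ι → ι ⊕ ι) := by
    intro i j hij
    by_cases hi : i ∈ T <;> by_cases hj : j ∈ T <;> simp_all
  have hcoord (i : ι) : IdentDistrib (Z (T.piecewise Sum.inr Sum.inl i)) (Z (.inl i)) μ μ := by
    by_cases hi : i ∈ T
    · simpa [hi] using (hident i).symm
    · simpa [hi] using IdentDistrib.refl (hident i).aemeasurable_fst
  convert IdentDistrib.pi hcoord (hindep.precomp hinj) (hindep.precomp Sum.inl_injective)
    using 1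
  ext ω i
  by_cases hi : i ∈ T <;> simp [hi]

theorem integral_offDiagSup_decoupled_le (hindep : iIndepFun Z μ)
    (hident : ∀ i, IdentDistrib (Z (.inl i)) (Z (.inr i)) μ μ)
    (hnonneg : ∀ x y m, 0 ≤ h x y m) (hmeas : ∀ m, Measurable fun q : S × S => h q.1 q.2 m)
    (hint : Integrable
      (fun ω => offDiagSup h (fun i => Z (.inl i) ω) (fun i => Z (.inl i) ω)) μ) :
    ∫ ω, offDiagSup h (fun i => Z (.inl i) ω) (fun i => Z (.inr i) ω) ∂μ ≤
      4 * ∫ ω, offDiagSup h (fun i => Z (.inl i) ω) (fun i => Z (.inl i) ω) ∂μ := by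
  set N := Fintype.card ι
  set X : Ω → ι → S := fun ω i => Z (.inl i) ω
  set X' : Ω → ι → S := fun ω i => Z (.inr i) ω
  have hsame (T : Finset ι) : IdentDistrib (fun ω => offDiagSup h (T.piecewise (X' ω) (X ω))
      (T.piecewise (X' ω) (X ω))) (fun ω => offDiagSup h (X ω) (X ω)) μ μ :=
    (identDistrib_piecewise hindep hident T).comp (measurable_offDiagSup_self hmeas)
  have hscaled : 2 ^ (N - 2) * ∫ ω, offDiagSup h (X ω) (X' ω) ∂μ ≤
      2 ^ (N - 2) * (4 * ∫ ω, offDiagSup h (X ω) (X ω) ∂μ) := calc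
    _ = ∫ ω, 2 ^ (N - 2) * offDiagSup h (X ω) (X' ω) ∂μ := (integral_const_mul _ _).symm
    _ ≤ ∫ ω, ∑ T : Finset ι,
          offDiagSup h (T.piecewise (X' ω) (X ω)) (T.piecewise (X' ω) (X ω)) ∂μ :=
      integral_mono_of_nonneg
        (.of_forall fun ω => mul_nonneg (by positivity) (offDiagSup_nonneg hnonneg _ _))
        (integrable_finsetSum _ fun T _ => (hsame T).integrable_iff.2 hint)
        (.of_forall fun ω => two_pow_mul_offDiagSup_le_sum_piecewise hnonneg (X ω) (X' ω))
    _ = 2 ^ N * ∫ ω, offDiagSup h (X ω) (X ω) ∂μ := by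
      rw [integral_finsetSum _ fun T _ => (hsame T).integrable_iff.2 hint]
      simp only [(hsame _).integral_eq, sum_const, card_univ, Fintype.card_finset, nsmul_eq_mul]
      push_cast; rfl
    _ ≤ 2 ^ (N - 2) * (4 * ∫ ω, offDiagSup h (X ω) (X ω) ∂μ) := by
      rw [← mul_assoc]
      gcongr
      · exact integral_nonneg fun ω => offDiagSup_nonneg hnonneg _ _
      · calc (2 : ℝ) ^ N ≤ 2 ^ (N - 2 + 2) := pow_le_pow_right₀ one_le_two (by omega)
          _ = _ := by rw [pow_add]; norm_num
  exact le_of_mul_le_mul_left hscaled (by positivity)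

end Decoupling

theorem stmt2_general {Ω S : Type*} [MeasureSpace Ω]
    [MeasurableSpace S] {n d : ℕ}
    (Z : (Fin n ⊕ Fin n) → Ω → S)
    (hindep : iIndepFun Z ℙ)
    (hident : ∀ i : Fin n, IdentDistrib (Z (.inl i)) (Z (.inr i)) ℙ ℙ)
    (h : S → S → Fin d → ℝ)
    (hnonneg : ∀ x₁ x₂ m, 0 ≤ h x₁ x₂ m)
    (hmeash : ∀ m, Measurable (fun q : S × S => h q.1 q.2 m))
    (hintXX : Integrable (fun ω => ⨆ m : Fin d, ⨆ i : Fin n, ⨆ j : Fin n, ⨆ _ : i ≠ j,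
        h (Z (.inl i) ω) (Z (.inl j) ω) m) ℙ) :
    (∫ ω, ⨆ m : Fin d, ⨆ i : Fin n, ⨆ j : Fin n, ⨆ _ : i ≠ j,
        h (Z (.inl i) ω) (Z (.inr j) ω) m ∂ℙ)
      ≤ 4 * ∫ ω, ⨆ m : Fin d, ⨆ i : Fin n, ⨆ j : Fin n, ⨆ _ : i ≠ j,
        h (Z (.inl i) ω) (Z (.inl j) ω) m ∂ℙ :=
  integral_offDiagSup_decoupled_le hindep hident hnonneg hmeash hintXX

/-- Decoupling for maxima of non-negative symmetric kernels: if `X₁,…,Xₙ` are independent,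
`X'₁,…,X'ₙ` is an independent copy (all `2n` variables jointly independent, with
`X'ᵢ ~ Xᵢ`), and `h` is symmetric and coordinatewise non-negative, then
`E[max_{m} max_{i≠j} h_m(Xᵢ, X'ⱼ)] ≤ 4 E[max_{m} max_{i≠j} h_m(Xᵢ, Xⱼ)]`. -/
theorem stmt2 {Ω S : Type*} [MeasureSpace Ω] [IsProbabilityMeasure (ℙ : Measure Ω)]
    [MeasurableSpace S] {n d : ℕ} (hn : 2 ≤ n) (hd : 1 ≤ d)
    (Z : (Fin n ⊕ Fin n) → Ω → S) (hmeas : ∀ i, Measurable (Z i))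
    (hindep : iIndepFun Z ℙ)
    (hident : ∀ i : Fin n, IdentDistrib (Z (.inl i)) (Z (.inr i)) ℙ ℙ)
    (h : S → S → Fin d → ℝ)
    (hsym : ∀ x₁ x₂, h x₁ x₂ = h x₂ x₁)
    (hnonneg : ∀ x₁ x₂ m, 0 ≤ h x₁ x₂ m)
    (hmeash : ∀ m, Measurable (fun q : S × S => h q.1 q.2 m))
    (hintXX : Integrable (fun ω => ⨆ m : Fin d, ⨆ i : Fin n, ⨆ j : Fin n, ⨆ _ : i ≠ j,
        h (Z (.inl i) ω) (Z (.inl j) ω) m) ℙ)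
    (hintXX' : Integrable (fun ω => ⨆ m : Fin d, ⨆ i : Fin n, ⨆ j : Fin n, ⨆ _ : i ≠ j,
        h (Z (.inl i) ω) (Z (.inr j) ω) m) ℙ) :
    (∫ ω, ⨆ m : Fin d, ⨆ i : Fin n, ⨆ j : Fin n, ⨆ _ : i ≠ j,
        h (Z (.inl i) ω) (Z (.inr j) ω) m ∂ℙ)
      ≤ 4 * ∫ ω, ⨆ m : Fin d, ⨆ i : Fin n, ⨆ j : Fin n, ⨆ _ : i ≠ j,
        h (Z (.inl i) ω) (Z (.inl j) ω) m ∂ℙ :=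
  stmt2_general Z hindep hident h hnonneg hmeash hintXX
end

section
/- Let q ≥ 1 and let X₁,…,Xₙ be independent random variables in a measurable space S with an independent copy X'₁,…,X'ₙ, and let ε₁,…,εₙ be i.i.d. Rademacher random variables independent of both. Let h_{mi} : S → ℝ be measurable functions with E|h_{mi}(Xᵢ)|^q < ∞ and E[h_{mi}(Xᵢ)] = 0 for all m = 1,…,d and i = 1,…,n. Then 2^{-q} E[max_{1≤m≤d} |Σ_{i=1}^n εᵢ h_{mi}(Xᵢ)|^q] ≤ E[max_{1≤m≤d} |Σ_{i=1}^n h_{mi}(Xᵢ)|^q] ≤ 2^q E[max_{1≤m≤d} |Σ_{i=1}^n εᵢ h_{mi}(Xᵢ)|^q]. -/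
/-!
Write `Wᵢ = (h_{mi}(Xᵢ))_m`, a centred vector of `ℝ^d` with the sup norm, so that the maxima are
`‖∑ Wᵢ‖^q` and `‖∑ εᵢ Wᵢ‖^q`. Fix signs `s` and put `Y = ∑_{sᵢ = 1} Wᵢ`, `Z = ∑_{sᵢ = -1} Wᵢ`:
these are independent and centred, `∑ Wᵢ = Y + Z` and `∑ sᵢ Wᵢ = Y - Z`. Jensen's inequality
conditionally on `Y` gives `E‖Y‖^q ≤ E‖Y - Z‖^q`, likewise for `Z`, and with
`‖a + b‖^q ≤ 2^(q-1) (‖a‖^q + ‖b‖^q)` this yields `E‖Y + Z‖^q ≤ 2^q E‖Y - Z‖^q`; replacing `Wᵢ`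
by `sᵢ Wᵢ` gives the reverse comparison. Since `ε` is independent of `X`, integrating these
fixed-sign inequalities against the law of `ε` proves both bounds.
-/

open MeasureTheory ProbabilityTheory Function

section Conditioning

variable {Ω β γ G : Type*} [MeasurableSpace Ω] {μ : Measure Ω}
  [MeasurableSpace β] [MeasurableSpace γ] [NormedAddCommGroup G]
  {V : Ω → β} {U : Ω → γ} {F : β → γ → G}

lemma ProbabilityTheory.IndepFun.integrable_uncurry_prod_map [IsProbabilityMeasure μ]
    (hind : IndepFun V U μ) (hV : Measurable V) (hU : Measurable U)
    (hF : StronglyMeasurable (uncurry F)) (hFi : Integrable (fun ω => F (V ω) (U ω)) μ) :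
    Integrable (uncurry F) ((μ.map V).prod (μ.map U)) := by
  rw [← hind.map_prod_eq_prod_map_map hV.aemeasurable hU.aemeasurable]
  exact (integrable_map_measure hF.aestronglyMeasurable (hV.prodMk hU).aemeasurable).2 hFi

variable [NormedSpace ℝ G]

lemma integral_map_slice (hV : Measurable V) (hF : StronglyMeasurable (uncurry F)) (u : γ) :
    ∫ x, F x u ∂(μ.map V) = ∫ ω, F (V ω) u ∂μ :=
  integral_map hV.aemeasurable (hF.comp_measurable measurable_prodMk_right).aestronglyMeasurable

variable [IsProbabilityMeasure μ]

lemma ProbabilityTheory.IndepFun.integrable_integral_comp (hind : IndepFun V U μ)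
    (hV : Measurable V) (hU : Measurable U) (hF : StronglyMeasurable (uncurry F))
    (hFi : Integrable (fun ω => F (V ω) (U ω)) μ) :
    Integrable (fun u => ∫ ω, F (V ω) u ∂μ) (μ.map U) := by
  simpa only [uncurry_apply_pair, integral_map_slice hV hF] using
    (hind.integrable_uncurry_prod_map hV hU hF hFi).integral_prod_right

lemma ProbabilityTheory.IndepFun.integral_comp_eq_integral_integral_comp [CompleteSpace G]
    (hind : IndepFun V U μ) (hV : Measurable V) (hU : Measurable U)
    (hF : StronglyMeasurable (uncurry F)) (hFi : Integrable (fun ω => F (V ω) (U ω)) μ) :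
    ∫ ω, F (V ω) (U ω) ∂μ = ∫ u, ∫ ω, F (V ω) u ∂μ ∂(μ.map U) := by
  have hmap := hind.map_prod_eq_prod_map_map hV.aemeasurable hU.aemeasurable
  calc ∫ ω, F (V ω) (U ω) ∂μ = ∫ p, uncurry F p ∂((μ.map V).prod (μ.map U)) := by
        rw [← hmap, integral_map (hV.prodMk hU).aemeasurable (hmap ▸ hF.aestronglyMeasurable)]
        rfl
    _ = ∫ u, ∫ x, F x u ∂(μ.map V) ∂(μ.map U) :=
        integral_prod_symm _ (hind.integrable_uncurry_prod_map hV hU hF hFi)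
    _ = ∫ u, ∫ ω, F (V ω) u ∂μ ∂(μ.map U) := by simp only [integral_map_slice hV hF]

end Conditioning

lemma ProbabilityTheory.iIndepFun.indepFun_finsetSum_finsetSum {Ω ι M : Type*}
    [MeasurableSpace Ω] {μ : Measure Ω} [AddCommMonoid M] [MeasurableSpace M] [MeasurableAdd₂ M]
    {f : ι → Ω → M} (hindep : iIndepFun f μ) {S T : Finset ι} (hST : Disjoint S T)
    (hf : ∀ i, Measurable (f i)) :
    IndepFun (fun ω => ∑ i ∈ S, f i ω) (fun ω => ∑ i ∈ T, f i ω) μ := by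
  have := (hindep.indepFun_finset S T hST hf).comp
    (φ := fun w : S → M => ∑ i, w i) (ψ := fun w : T → M => ∑ i, w i) (by fun_prop) (by fun_prop)
  convert this using 1 <;> ext ω <;> exact (Finset.sum_coe_sort _ _).symm

section Symmetrization

variable {Ω E : Type*} [MeasurableSpace Ω] {μ : Measure Ω} [NormedAddCommGroup E] {q : ℝ}

lemma norm_add_rpow_le (hq : 1 ≤ q) (a b : E) :
    ‖a + b‖ ^ q ≤ 2 ^ (q - 1) * (‖a‖ ^ q + ‖b‖ ^ q) := by
  have h := (NNReal.rpow_le_rpow (nnnorm_add_le a b) (by linarith)).trans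
    (NNReal.rpow_add_le_mul_rpow_add_rpow ‖a‖₊ ‖b‖₊ hq)
  exact_mod_cast h

lemma MeasureTheory.MemLp.integrable_norm_rpow_ofReal [IsFiniteMeasure μ] {f : Ω → E}
    (hf : MemLp f (ENNReal.ofReal q) μ) (hq : 0 ≤ q) : Integrable (fun ω => ‖f ω‖ ^ q) μ := by
  simpa [ENNReal.toReal_ofReal hq] using hf.integrable_norm_rpow'

variable [NormedSpace ℝ E]

lemma norm_integral_rpow_le_integral_norm_rpow [IsProbabilityMeasure μ] (hq : 1 ≤ q)
    {f : Ω → E} (hf : MemLp f (ENNReal.ofReal q) μ) :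
    ‖∫ ω, f ω ∂μ‖ ^ q ≤ ∫ ω, ‖f ω‖ ^ q ∂μ := by
  have hfi : Integrable f μ := hf.integrable (by simpa using hq)
  calc ‖∫ ω, f ω ∂μ‖ ^ q ≤ (∫ ω, ‖f ω‖ ∂μ) ^ q :=
        Real.rpow_le_rpow (norm_nonneg _) (norm_integral_le_integral_norm f) (by linarith)
    _ ≤ ∫ ω, ‖f ω‖ ^ q ∂μ :=
        (convexOn_rpow hq).map_integral_le (Real.continuous_rpow_const (by linarith)).continuousOn
          isClosed_Ici          (ae_of_all _ fun ω => norm_nonneg (f ω)) hfi.norm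
          (hf.integrable_norm_rpow_ofReal (by linarith))

variable [CompleteSpace E] [MeasurableSpace E] [BorelSpace E] [SecondCountableTopology E]
  [IsProbabilityMeasure μ]

lemma integral_norm_rpow_le_integral_norm_add_rpow (hq : 1 ≤ q) {Y Z : Ω → E}
    (hind : IndepFun Y Z μ) (hY : Measurable Y) (hZ : Measurable Z)
    (hYq : MemLp Y (ENNReal.ofReal q) μ) (hZq : MemLp Z (ENNReal.ofReal q) μ)
    (hZc : ∫ ω, Z ω ∂μ = 0) :
    ∫ ω, ‖Y ω‖ ^ q ∂μ ≤ ∫ ω, ‖Y ω + Z ω‖ ^ q ∂μ := by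
  have hq0 : 0 ≤ q := by linarith
  have hF : StronglyMeasurable (uncurry fun (z y : E) => ‖y + z‖ ^ q) :=
    (by fun_prop (disch := exact hq0) :
      Continuous fun p : E × E => ‖p.2 + p.1‖ ^ q).stronglyMeasurable
  have hsum : Integrable (fun ω => ‖Y ω + Z ω‖ ^ q) μ :=
    (hYq.add hZq).integrable_norm_rpow_ofReal hq0
  have hslice (y : E) : ‖y‖ ^ q ≤ ∫ ω, ‖y + Z ω‖ ^ q ∂μ := by
    have hmean : ∫ ω, (y + Z ω) ∂μ = y := by
      rw [integral_add (integrable_const y) (hZq.integrable (by simpa using hq)), hZc]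
      simp
    simpa only [hmean] using
      norm_integral_rpow_le_integral_norm_rpow hq (f := fun ω => y + Z ω) ((memLp_const y).add hZq)
  calc ∫ ω, ‖Y ω‖ ^ q ∂μ = ∫ y, ‖y‖ ^ q ∂(μ.map Y) :=
        (integral_map hY.aemeasurable
          ((continuous_norm.rpow_const fun _ => Or.inr hq0).aestronglyMeasurable)).symm
    _ ≤ ∫ y, ∫ ω, ‖y + Z ω‖ ^ q ∂μ ∂(μ.map Y) :=
        integral_mono_of_nonneg (ae_of_all _ fun y => by positivity)
          (hind.symm.integrable_integral_comp hZ hY hF hsum) (ae_of_all _ hslice)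
    _ = ∫ ω, ‖Y ω + Z ω‖ ^ q ∂μ :=
        (hind.symm.integral_comp_eq_integral_integral_comp hZ hY hF hsum).symm

lemma integral_norm_add_rpow_le_two_rpow_mul_integral_norm_sub_rpow (hq : 1 ≤ q) {Y Z : Ω → E}
    (hind : IndepFun Y Z μ) (hY : Measurable Y) (hZ : Measurable Z)
    (hYq : MemLp Y (ENNReal.ofReal q) μ) (hZq : MemLp Z (ENNReal.ofReal q) μ)
    (hYc : ∫ ω, Y ω ∂μ = 0) (hZc : ∫ ω, Z ω ∂μ = 0) :
    ∫ ω, ‖Y ω + Z ω‖ ^ q ∂μ ≤ 2 ^ q * ∫ ω, ‖Y ω - Z ω‖ ^ q ∂μ := by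
  have hq0 : 0 ≤ q := by linarith
  have hY_le : ∫ ω, ‖Y ω‖ ^ q ∂μ ≤ ∫ ω, ‖Y ω - Z ω‖ ^ q ∂μ := by
    have hind' : IndepFun Y (-Z) μ := hind.comp measurable_id measurable_neg
    simpa only [Pi.neg_apply, sub_eq_add_neg] using
      integral_norm_rpow_le_integral_norm_add_rpow hq hind' hY hZ.neg hYq hZq.neg
      (by simp only [Pi.neg_apply, integral_neg, hZc, neg_zero])
  have hZ_le : ∫ ω, ‖Z ω‖ ^ q ∂μ ≤ ∫ ω, ‖Y ω - Z ω‖ ^ q ∂μ := by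
    have hind' : IndepFun (-Z) Y μ := hind.symm.comp measurable_neg measurable_id
    simpa only [Pi.neg_apply, norm_neg, neg_add_eq_sub] using
      integral_norm_rpow_le_integral_norm_add_rpow hq hind' hZ.neg hY hZq.neg hYq hYc
  calc ∫ ω, ‖Y ω + Z ω‖ ^ q ∂μ ≤ ∫ ω, 2 ^ (q - 1) * (‖Y ω‖ ^ q + ‖Z ω‖ ^ q) ∂μ :=
        integral_mono ((hYq.add hZq).integrable_norm_rpow_ofReal hq0)
          (((hYq.integrable_norm_rpow_ofReal hq0).add
            (hZq.integrable_norm_rpow_ofReal hq0)).const_mul _)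
          fun ω => norm_add_rpow_le hq _ _
    _ = 2 ^ (q - 1) * (∫ ω, ‖Y ω‖ ^ q ∂μ + ∫ ω, ‖Z ω‖ ^ q ∂μ) := by
        rw [integral_const_mul, integral_add (hYq.integrable_norm_rpow_ofReal hq0)
          (hZq.integrable_norm_rpow_ofReal hq0)]
    _ ≤ 2 ^ (q - 1) * (2 * ∫ ω, ‖Y ω - Z ω‖ ^ q ∂μ) := by gcongr; linarith
    _ = 2 ^ q * ∫ ω, ‖Y ω - Z ω‖ ^ q ∂μ := by
        rw [Real.rpow_sub_one two_ne_zero]; ring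

section Signs

variable {ι : Type*} [Fintype ι] {W : ι → Ω → E}

lemma integral_norm_sum_rpow_le_two_rpow_mul_signed (hq : 1 ≤ q) (hindep : iIndepFun W μ)
    (hW : ∀ i, Measurable (W i)) (hWq : ∀ i, MemLp (W i) (ENNReal.ofReal q) μ)
    (hWc : ∀ i, ∫ ω, W i ω ∂μ = 0) {s : ι → ℝ} (hs : ∀ i, s i = 1 ∨ s i = -1) :
    ∫ ω, ‖∑ i, W i ω‖ ^ q ∂μ ≤ 2 ^ q * ∫ ω, ‖∑ i, s i • W i ω‖ ^ q ∂μ := by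
  classical
  set A := Finset.univ.filter fun i => s i = 1
  have hsum (ω : Ω) : ∑ i, W i ω = ∑ i ∈ A, W i ω + ∑ i ∈ Aᶜ, W i ω :=
    (Finset.sum_add_sum_compl A _).symm
  have hsigned (ω : Ω) : ∑ i, s i • W i ω = ∑ i ∈ A, W i ω - ∑ i ∈ Aᶜ, W i ω := by
    rw [← Finset.sum_add_sum_compl A, sub_eq_add_neg, ← Finset.sum_neg_distrib]
    congr 1 <;> refine Finset.sum_congr rfl fun i hi => ?_
    · simp [(Finset.mem_filter.1 hi).2]
    · simp [(hs i).resolve_left (by simpa [A] using hi)]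
  have hcentered (B : Finset ι) : ∫ ω, ∑ i ∈ B, W i ω ∂μ = 0 := by
    rw [integral_finsetSum _ fun i _ => (hWq i).integrable (by simpa using hq)]
    exact Finset.sum_eq_zero fun i _ => hWc i
  simp only [hsum, hsigned]
  exact integral_norm_add_rpow_le_two_rpow_mul_integral_norm_sub_rpow hq
    (hindep.indepFun_finsetSum_finsetSum disjoint_compl_right hW)
    (Finset.measurable_sum _ fun i _ => hW i) (Finset.measurable_sum _ fun i _ => hW i)
    (memLp_finsetSum _ fun i _ => hWq i) (memLp_finsetSum _ fun i _ => hWq i)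
    (hcentered A) (hcentered Aᶜ)

lemma integral_norm_signed_sum_rpow_le_two_rpow_mul (hq : 1 ≤ q) (hindep : iIndepFun W μ)
    (hW : ∀ i, Measurable (W i)) (hWq : ∀ i, MemLp (W i) (ENNReal.ofReal q) μ)
    (hWc : ∀ i, ∫ ω, W i ω ∂μ = 0) {s : ι → ℝ} (hs : ∀ i, s i = 1 ∨ s i = -1) :
    ∫ ω, ‖∑ i, s i • W i ω‖ ^ q ∂μ ≤ 2 ^ q * ∫ ω, ‖∑ i, W i ω‖ ^ q ∂μ := by
  have hss (i : ι) : s i * s i = 1 := by rcases hs i with h | h <;> simp [h]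
  simpa only [smul_smul, hss, one_smul] using
    integral_norm_sum_rpow_le_two_rpow_mul_signed hq (W := fun i ω => s i • W i ω)
      (hindep.comp (fun i => (s i • ·)) fun i => measurable_const_smul (s i))
      (fun i => (hW i).const_smul (s i)) (fun i => (hWq i).const_smul (s i))
      (fun i => by rw [integral_smul, hWc i, smul_zero]) hs

theorem integral_norm_sum_rpow_symmetrization (hq : 1 ≤ q) (hindep : iIndepFun W μ)
    (hW : ∀ i, Measurable (W i)) (hWq : ∀ i, MemLp (W i) (ENNReal.ofReal q) μ)
    (hWc : ∀ i, ∫ ω, W i ω ∂μ = 0) {ε : ι → Ω → ℝ} (hε : ∀ i, Measurable (ε i))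
    (hsign : ∀ i, ∀ᵐ ω ∂μ, ε i ω = 1 ∨ ε i ω = -1)
    (hWε : IndepFun (fun ω i => W i ω) (fun ω i => ε i ω) μ) :
    ∫ ω, ‖∑ i, ε i ω • W i ω‖ ^ q ∂μ ≤ 2 ^ q * ∫ ω, ‖∑ i, W i ω‖ ^ q ∂μ ∧
      ∫ ω, ‖∑ i, W i ω‖ ^ q ∂μ ≤ 2 ^ q * ∫ ω, ‖∑ i, ε i ω • W i ω‖ ^ q ∂μ := by
  have hq0 : 0 ≤ q := by linarith
  have hWv : Measurable fun ω i => W i ω := measurable_pi_lambda _ hW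
  have hεv : Measurable fun ω i => ε i ω := measurable_pi_lambda _ hε
  have := Measure.isProbabilityMeasure_map (μ := μ) hεv.aemeasurable
  have hF : StronglyMeasurable
      (uncurry fun (w : ι → E) (e : ι → ℝ) => ‖∑ i, e i • w i‖ ^ q) :=
    (by fun_prop (disch := exact hq0) :
      Continuous fun p : (ι → E) × (ι → ℝ) => ‖∑ i, p.2 i • p.1 i‖ ^ q).stronglyMeasurable
  have hint : Integrable (fun ω => ‖∑ i, ε i ω • W i ω‖ ^ q) μ := by
    refine (memLp_finsetSum (f := fun i ω => ε i ω • W i ω) _ fun i _ => (hWq i).of_le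
      ((hε i).smul (hW i)).aestronglyMeasurable ?_).integrable_norm_rpow_ofReal hq0
    filter_upwards [hsign i] with ω hω
    rcases hω with h | h <;> simp [h]
  have hsigns : ∀ᵐ e ∂(μ.map fun ω i => ε i ω), ∀ i, e i = 1 ∨ e i = -1 :=
    (ae_map_iff hεv.aemeasurable (by measurability)).2 (ae_all_iff.2 hsign)
  have hgi := hWε.integrable_integral_comp hWv hεv hF hint
  rw [hWε.integral_comp_eq_integral_integral_comp hWv hεv hF hint]
  constructor
  · calc _ ≤ ∫ _, 2 ^ q * ∫ ω, ‖∑ i, W i ω‖ ^ q ∂μ ∂(μ.map fun ω i => ε i ω) :=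
          integral_mono_ae hgi (integrable_const _) <| hsigns.mono fun e he =>
            integral_norm_signed_sum_rpow_le_two_rpow_mul hq hindep hW hWq hWc he
      _ = _ := by simp
  · calc _ = ∫ _, ∫ ω, ‖∑ i, W i ω‖ ^ q ∂μ ∂(μ.map fun ω i => ε i ω) := by simp
      _ ≤ ∫ e, 2 ^ q * ∫ ω, ‖∑ i, e i • W i ω‖ ^ q ∂μ ∂(μ.map fun ω i => ε i ω) :=
          integral_mono_ae (integrable_const _) (hgi.const_mul _) <| hsigns.mono fun e he =>
            integral_norm_sum_rpow_le_two_rpow_mul_signed hq hindep hW hWq hWc he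
      _ = _ := integral_const_mul _ _

end Signs

end Symmetrization

lemma ciSup_abs_rpow_eq_norm_rpow {ι : Type*} [Fintype ι] {q : ℝ} (hq : 0 < q) (v : ι → ℝ) :
    ⨆ i, |v i| ^ q = ‖v‖ ^ q := by
  rcases isEmpty_or_nonempty ι with hι | hι
  · simp [Subsingleton.elim v 0, Real.zero_rpow hq.ne']
  obtain ⟨i, -, hi⟩ := Finset.exists_mem_eq_sup Finset.univ Finset.univ_nonempty fun i => ‖v i‖₊
  refine le_antisymm (ciSup_le fun j => ?_) ?_
  · exact Real.rpow_le_rpow (abs_nonneg _) (norm_le_pi_norm v j) hq.le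
  · have : ‖v‖ = |v i| := by rw [Pi.norm_def, hi, coe_nnnorm, Real.norm_eq_abs]
    exact this ▸ le_ciSup (f := fun j => |v j| ^ q) (Finite.bddAbove_range _) i

lemma ae_eq_one_or_eq_neg_one {Ω : Type*} [MeasurableSpace Ω] {μ : Measure Ω}
    [IsProbabilityMeasure μ] {ε : Ω → ℝ} (hε : Measurable ε) (h₁ : μ (ε ⁻¹' {1}) = 1 / 2)
    (h₂ : μ (ε ⁻¹' {-1}) = 1 / 2) : ∀ᵐ ω ∂μ, ε ω = 1 ∨ ε ω = -1 := by
  have hdisj : Disjoint (ε ⁻¹' {1}) (ε ⁻¹' {-1}) :=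
    (Set.disjoint_singleton.2 (by norm_num)).preimage ε
  rw [ae_iff_measure_eq (by measurability)]
  change μ (ε ⁻¹' {1} ∪ ε ⁻¹' {-1}) = μ Set.univ
  rw [measure_union hdisj (hε (measurableSet_singleton _)), h₁, h₂, ENNReal.add_halves,
    measure_univ]

theorem stmt3_general {Ω S : Type*} [MeasureSpace Ω] [IsProbabilityMeasure (ℙ : Measure Ω)]
    [MeasurableSpace S] {n d : ℕ} (q : ℝ) (hq : 1 ≤ q)
    (X : Fin n → Ω → S) (ε : Fin n → Ω → ℝ)
    (hmX : ∀ i, Measurable (X i)) (hmε : ∀ i, Measurable (ε i))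
    (hindepX : iIndepFun X ℙ)
    (hrad : ∀ i, ℙ (ε i ⁻¹' {1}) = 1/2 ∧ ℙ (ε i ⁻¹' {-1}) = 1/2)
    (hindepXε : IndepFun (fun ω i => X i ω) (fun ω i => ε i ω) ℙ)
    (h : Fin d → Fin n → S → ℝ)
    (hmeas : ∀ m i, Measurable (h m i))
    (hcen : ∀ m i, ∫ ω, h m i (X i ω) ∂ℙ = 0)
    (hmom : ∀ m i, Integrable (fun ω => |h m i (X i ω)| ^ q) ℙ) :
    (2 : ℝ) ^ (-q) * (∫ ω, ⨆ m : Fin d, |∑ i, ε i ω * h m i (X i ω)| ^ q ∂ℙ)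
      ≤ (∫ ω, ⨆ m : Fin d, |∑ i, h m i (X i ω)| ^ q ∂ℙ) ∧
    (∫ ω, ⨆ m : Fin d, |∑ i, h m i (X i ω)| ^ q ∂ℙ)
      ≤ (2 : ℝ) ^ q * ∫ ω, ⨆ m : Fin d, |∑ i, ε i ω * h m i (X i ω)| ^ q ∂ℙ := by
  set W : Fin n → Ω → Fin d → ℝ := fun i ω m => h m i (X i ω)
  have hhi (i : Fin n) : Measurable fun (x : S) (m : Fin d) => h m i x :=
    measurable_pi_lambda _ fun m => hmeas m i
  have hW (i : Fin n) : Measurable (W i) := (hhi i).comp (hmX i)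
  have hWq (i : Fin n) : MemLp (W i) (ENNReal.ofReal q) ℙ := memLp_pi_iff.2 fun m =>
    (integrable_norm_rpow_iff ((hmeas m i).comp (hmX i)).aestronglyMeasurable (by simp; linarith)
      ENNReal.ofReal_ne_top).1
      (by simpa [ENNReal.toReal_ofReal (by linarith : 0 ≤ q)] using hmom m i)
  have hWc (i : Fin n) : ∫ ω, W i ω ∂ℙ = 0 := funext fun m => by
    rw [eval_integral (fun m => (hWq i).integrable (by simpa using hq) |>.eval m)]
    exact hcen m i
  have hWε : IndepFun (fun ω i => W i ω) (fun ω i => ε i ω) ℙ :=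
    hindepXε.comp (measurable_pi_lambda _ fun i => (hhi i).comp (measurable_pi_apply i))
      measurable_id
  have hsum (ω : Ω) : ⨆ m, |∑ i, h m i (X i ω)| ^ q = ‖∑ i, W i ω‖ ^ q := by
    rw [← ciSup_abs_rpow_eq_norm_rpow (by linarith)]
    simp [W, Finset.sum_apply]
  have hsigned (ω : Ω) : ⨆ m, |∑ i, ε i ω * h m i (X i ω)| ^ q = ‖∑ i, ε i ω • W i ω‖ ^ q := by
    rw [← ciSup_abs_rpow_eq_norm_rpow (by linarith)]
    simp [W, Finset.sum_apply]
  obtain ⟨hupper, hlower⟩ := integral_norm_sum_rpow_symmetrization hq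
    (hindepX.comp (fun i x m => h m i x) hhi) hW hWq hWc hmε
    (fun i => ae_eq_one_or_eq_neg_one (hmε i) (hrad i).1 (hrad i).2) hWε
  simp only [hsum, hsigned]
  refine ⟨?_, hlower⟩
  rwa [Real.rpow_neg zero_le_two, inv_mul_le_iff₀ (by positivity)]

/-- Symmetrization inequality for maxima with index-dependent functions: for independent
`X₁,…,Xₙ`, i.i.d. Rademacher signs `ε₁,…,εₙ` independent of the `Xᵢ`, centered functions
`h_{mi}` with finite `q`-th moments (`q ≥ 1`),
`2^{-q} E[max_m |Σᵢ εᵢ h_{mi}(Xᵢ)|^q] ≤ E[max_m |Σᵢ h_{mi}(Xᵢ)|^q]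
  ≤ 2^q E[max_m |Σᵢ εᵢ h_{mi}(Xᵢ)|^q]`. -/
theorem stmt3 {Ω S : Type*} [MeasureSpace Ω] [IsProbabilityMeasure (ℙ : Measure Ω)]
    [MeasurableSpace S] {n d : ℕ} (q : ℝ) (hq : 1 ≤ q)
    (X : Fin n → Ω → S) (ε : Fin n → Ω → ℝ)
    (hmX : ∀ i, Measurable (X i)) (hmε : ∀ i, Measurable (ε i))
    (hindepX : iIndepFun X ℙ)
    (hindepε : iIndepFun ε ℙ)
    (hrad : ∀ i, ℙ (ε i ⁻¹' {1}) = 1/2 ∧ ℙ (ε i ⁻¹' {-1}) = 1/2)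
    (hindepXε : IndepFun (fun ω i => X i ω) (fun ω i => ε i ω) ℙ)
    (h : Fin d → Fin n → S → ℝ)
    (hmeas : ∀ m i, Measurable (h m i))
    (hcen : ∀ m i, ∫ ω, h m i (X i ω) ∂ℙ = 0)
    (hmom : ∀ m i, Integrable (fun ω => |h m i (X i ω)| ^ q) ℙ) :
    (2 : ℝ) ^ (-q) * (∫ ω, ⨆ m : Fin d, |∑ i, ε i ω * h m i (X i ω)| ^ q ∂ℙ)
      ≤ (∫ ω, ⨆ m : Fin d, |∑ i, h m i (X i ω)| ^ q ∂ℙ) ∧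
    (∫ ω, ⨆ m : Fin d, |∑ i, h m i (X i ω)| ^ q ∂ℙ)
      ≤ (2 : ℝ) ^ q * ∫ ω, ⨆ m : Fin d, |∑ i, ε i ω * h m i (X i ω)| ^ q ∂ℙ :=
  stmt3_general q hq X ε hmX hmε hindepX hrad hindepXε h hmeas hcen hmom
end

section
/- Let r ∈ [0,1), β ∈ (0,1), and let Σ = {σ_{mk}} be a p×p symmetric matrix satisfying max_{1≤m≤p} Σ_{k=1}^p |σ_{mk}|^r ≤ ζ_p. Let Ŝ = {ŝ_{mk}} be a symmetric matrix and τ > 0 be such that max_{m,k}|ŝ_{mk} - σ_{mk}| ≤ βτ. Define the thresholded estimator Σ̂(τ) with entries ŝ_{mk} 1{|ŝ_{mk}| > τ}. Then ‖Σ̂(τ) - Σ‖₂ ≤ [3 + 2β + (β/(1-β))^r] ζ_p τ^{1-r}, where ‖·‖₂ denotes the matrix spectral norm (bounded above by the maximal absolute row sum). -/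
open Matrix

/-- Deterministic thresholding bound (core of Theorem 4.3): if `Σ` is symmetric with
`Σ_k |σ_{mk}|^r ≤ ζ` for each row `m` (`r ∈ [0,1)`), `Ŝ` is symmetric with
`max_{m,k}|ŝ_{mk}-σ_{mk}| ≤ βτ` (`β ∈ (0,1)`, `τ > 0`), then the thresholded estimator
`Σ̂(τ) = {ŝ_{mk} 1{|ŝ_{mk}| > τ}}` satisfies
`‖Σ̂(τ) - Σ‖₂ ≤ [3 + 2β + (β/(1-β))^r] ζ τ^{1-r}`, the spectral norm bound being
expressed via the Euclidean operator bound for every vector `x`. -/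
theorem stmt12 {p : ℕ} (r β : ℝ) (hr : r ∈ Set.Ico (0:ℝ) 1) (hβ : β ∈ Set.Ioo (0:ℝ) 1)
    (Sig Shat : Matrix (Fin p) (Fin p) ℝ) (hSig : Sig.IsSymm) (hShat : Shat.IsSymm)
    (ζ τ : ℝ) (hτ : 0 < τ)
    (hsparse : ∀ m, ∑ k, |Sig m k| ^ r ≤ ζ)
    (hclose : ∀ m k, |Shat m k - Sig m k| ≤ β * τ) :
    ∀ x : Fin p → ℝ,
      Real.sqrt (∑ m, (((Matrix.of fun m k => if τ < |Shat m k| then Shat m k else 0)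
          - Sig).mulVec x m) ^ 2)
        ≤ (3 + 2 * β + (β / (1 - β)) ^ r) * ζ * τ ^ (1 - r)
            * Real.sqrt (∑ k, (x k) ^ 2) := by
  obtain ⟨hr0, hr1⟩ := hr
  obtain ⟨hβ0, hβ1⟩ := hβ
  intro x
  rcases Nat.eq_zero_or_pos p with hp | hp
  · subst hp
    simp
  set M : Matrix (Fin p) (Fin p) ℝ :=
    (Matrix.of fun m k => if τ < |Shat m k| then Shat m k else 0) - Sig with hMdef
  set C : ℝ := (3 + 2 * β + (β / (1 - β)) ^ r) * ζ * τ ^ (1 - r) with hCdef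
  have h1β : (0:ℝ) < 1 - β := by linarith
  have hζ0 : 0 ≤ ζ := by
    refine le_trans ?_ (hsparse ⟨0, hp⟩)
    exact Finset.sum_nonneg fun k _ => Real.rpow_nonneg (abs_nonneg _) r
  have hτ1r : (0:ℝ) < τ ^ (1 - r) := Real.rpow_pos_of_pos hτ _
  have hcoef : (0:ℝ) ≤ 3 + 2 * β + (β / (1 - β)) ^ r := by
    have := Real.rpow_nonneg (le_of_lt (div_pos hβ0 h1β)) r
    linarith
  have hC0 : 0 ≤ C := by
    rw [hCdef]; positivity
  -- per-entry bound
  set c : ℝ := β * τ * ((1 - β) * τ) ^ (-r) + ((1 + β) * τ) ^ (1 - r) with hcdef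
  have hc0 : 0 ≤ c := by
    rw [hcdef]; positivity
  have hkey : ∀ m k, |M m k| ≤ c * |Sig m k| ^ r := by
    intro m k
    have hMmk : M m k = (if τ < |Shat m k| then Shat m k else 0) - Sig m k := rfl
    by_cases h : τ < |Shat m k|
    · rw [hMmk, if_pos h]
      have h2 : (1 - β) * τ ≤ |Sig m k| := by
        have := hclose m k
        have := abs_sub_abs_le_abs_sub (Shat m k) (Sig m k)
        have h3 : |Shat m k| - |Sig m k| ≤ β * τ := le_trans this (hclose m k)
        nlinarith
      have h4 : ((1 - β) * τ) ^ r ≤ |Sig m k| ^ r :=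
        Real.rpow_le_rpow (by positivity) h2 hr0
      have h5 : (0:ℝ) < ((1 - β) * τ) ^ r := Real.rpow_pos_of_pos (by positivity) r
      have h6 : (1:ℝ) ≤ ((1 - β) * τ) ^ (-r) * |Sig m k| ^ r := by
        rw [Real.rpow_neg (by positivity), ← div_eq_inv_mul]
        exact (one_le_div h5).mpr h4
      have h7 : |Shat m k - Sig m k| ≤ β * τ := hclose m k
      have h8 : (0:ℝ) ≤ ((1 + β) * τ) ^ (1 - r) * |Sig m k| ^ r := by positivity
      have h9 : β * τ ≤ β * τ * (((1 - β) * τ) ^ (-r) * |Sig m k| ^ r) := by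
        nlinarith [mul_pos hβ0 hτ]
      rw [hcdef]; nlinarith
    · rw [hMmk, if_neg h]
      push_neg at h
      have habs : |(0:ℝ) - Sig m k| = |Sig m k| := by rw [zero_sub, abs_neg]
      rw [habs]
      have h2 : |Sig m k| ≤ (1 + β) * τ := by
        have h3 : |Sig m k| - |Shat m k| ≤ β * τ :=
          le_trans (abs_sub_abs_le_abs_sub _ _)
            (by rw [abs_sub_comm]; exact hclose m k)
        nlinarith
      have hmain : |Sig m k| ≤ |Sig m k| ^ r * ((1 + β) * τ) ^ (1 - r) := by
        rcases eq_or_lt_of_le (abs_nonneg (Sig m k)) with h0 | h0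
        · rw [← h0]; positivity
        · calc |Sig m k| = |Sig m k| ^ r * |Sig m k| ^ (1 - r) := by
                rw [← Real.rpow_add h0]; norm_num
            _ ≤ |Sig m k| ^ r * ((1 + β) * τ) ^ (1 - r) :=
              mul_le_mul_of_nonneg_left
                (Real.rpow_le_rpow (le_of_lt h0) h2 (by linarith))
                (Real.rpow_nonneg (abs_nonneg _) r)
      have h8 : (0:ℝ) ≤ β * τ * ((1 - β) * τ) ^ (-r) * |Sig m k| ^ r := by positivity
      rw [hcdef]; nlinarith
  -- coefficient bound
  have hcC : c * ζ ≤ C := by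
    have e1 : β * τ * ((1 - β) * τ) ^ (-r) = β * (1 - β) ^ (-r) * τ ^ (1 - r) := by
      rw [Real.mul_rpow (by positivity) (le_of_lt hτ)]
      have : τ * τ ^ (-r) = τ ^ (1 - r) := by
        rw [show (1 - r) = 1 + (-r) by ring, Real.rpow_add hτ, Real.rpow_one]
      rw [← this]; ring
    have e2 : ((1 + β) * τ) ^ (1 - r) = (1 + β) ^ (1 - r) * τ ^ (1 - r) :=
      Real.mul_rpow (by positivity) (le_of_lt hτ)
    have i1 : β * (1 - β) ^ (-r) ≤ (β / (1 - β)) ^ r := by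
      have hβr : β ≤ β ^ r := by
        calc β = β ^ (1:ℝ) := (Real.rpow_one β).symm
        _ ≤ β ^ r := Real.rpow_le_rpow_of_exponent_ge hβ0 (le_of_lt hβ1) (le_of_lt hr1)
      have hd : (β / (1 - β)) ^ r = β ^ r * (1 - β) ^ (-r) := by
        rw [Real.div_rpow (le_of_lt hβ0) (le_of_lt h1β), Real.rpow_neg (le_of_lt h1β)]
        ring
      rw [hd]
      exact mul_le_mul_of_nonneg_right hβr (Real.rpow_nonneg (by positivity) _)
    have i2 : (1 + β) ^ (1 - r) ≤ 1 + β := by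
      calc (1 + β) ^ (1 - r) ≤ (1 + β) ^ (1:ℝ) :=
        Real.rpow_le_rpow_of_exponent_le (by linarith) (by linarith)
      _ = 1 + β := Real.rpow_one _
    have hcbound : c ≤ (3 + 2 * β + (β / (1 - β)) ^ r) * τ ^ (1 - r) := by
      rw [hcdef, e1, e2]
      nlinarith [hτ1r.le]
    calc c * ζ ≤ (3 + 2 * β + (β / (1 - β)) ^ r) * τ ^ (1 - r) * ζ :=
      mul_le_mul_of_nonneg_right hcbound hζ0
    _ = C := by rw [hCdef]; ring
  -- row sum bound
  have hrow : ∀ m, ∑ k, |M m k| ≤ C := by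
    intro m
    calc ∑ k, |M m k| ≤ ∑ k, c * |Sig m k| ^ r :=
      Finset.sum_le_sum fun k _ => hkey m k
    _ = c * ∑ k, |Sig m k| ^ r := by rw [Finset.mul_sum]
    _ ≤ c * ζ := mul_le_mul_of_nonneg_left (hsparse m) hc0
    _ ≤ C := hcC
  -- symmetry of M
  have hMsymm : ∀ m k, M m k = M k m := by
    intro m k
    have hs1 : Shat m k = Shat k m := hShat.apply k m |>.symm ▸ rfl
    have hs2 : Sig m k = Sig k m := hSig.apply k m |>.symm ▸ rfl
    show (if τ < |Shat m k| then Shat m k else 0) - Sig m k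
      = (if τ < |Shat k m| then Shat k m else 0) - Sig k m
    rw [hs1, hs2]
  -- Cauchy-Schwarz per row
  have hCS : ∀ m, (M.mulVec x m) ^ 2 ≤ C * ∑ k, |M m k| * (x k) ^ 2 := by
    intro m
    have hmv : M.mulVec x m = ∑ k, M m k * x k := rfl
    have h1 : (∑ k, M m k * x k) ^ 2 ≤ (∑ k, |M m k * x k|) ^ 2 := by
      rw [← sq_abs]
      apply pow_le_pow_left₀ (abs_nonneg _)
      exact Finset.abs_sum_le_sum_abs _ _
    have h2 : (∑ k, |M m k * x k|) ^ 2 ≤ (∑ k, |M m k|) * ∑ k, |M m k| * (x k) ^ 2 := by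
      have := Finset.sum_mul_sq_le_sq_mul_sq Finset.univ
        (fun k => Real.sqrt |M m k|) (fun k => Real.sqrt |M m k| * |x k|)
      have e1 : ∀ k : Fin p, Real.sqrt |M m k| * (Real.sqrt |M m k| * |x k|)
          = |M m k * x k| := by
        intro k
        rw [← mul_assoc, Real.mul_self_sqrt (abs_nonneg _), abs_mul]
      have e2 : ∀ k : Fin p, Real.sqrt |M m k| ^ 2 = |M m k| :=
        fun k => Real.sq_sqrt (abs_nonneg _)
      have e3 : ∀ k : Fin p, (Real.sqrt |M m k| * |x k|) ^ 2 = |M m k| * (x k) ^ 2 := by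
        intro k
        rw [mul_pow, Real.sq_sqrt (abs_nonneg _), sq_abs]
      simp only [e1, e2, e3] at this
      exact this
    have h3 : (∑ k, |M m k|) * (∑ k, |M m k| * (x k) ^ 2)
        ≤ C * ∑ k, |M m k| * (x k) ^ 2 := by
      apply mul_le_mul_of_nonneg_right (hrow m)
      exact Finset.sum_nonneg fun k _ => mul_nonneg (abs_nonneg _) (sq_nonneg _)
    rw [hmv]
    exact le_trans h1 (le_trans h2 h3)
  -- sum up
  have htotal : ∑ m, (M.mulVec x m) ^ 2 ≤ C ^ 2 * ∑ k, (x k) ^ 2 := by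
    calc ∑ m, (M.mulVec x m) ^ 2 ≤ ∑ m, C * ∑ k, |M m k| * (x k) ^ 2 :=
      Finset.sum_le_sum fun m _ => hCS m
    _ = C * ∑ k, (∑ m, |M m k|) * (x k) ^ 2 := by
        rw [← Finset.mul_sum, Finset.sum_comm]
        congr 1
        exact Finset.sum_congr rfl fun k _ => (Finset.sum_mul _ _ _).symm
    _ ≤ C * ∑ k, C * (x k) ^ 2 := by
        apply mul_le_mul_of_nonneg_left _ hC0
        apply Finset.sum_le_sum
        intro k _
        apply mul_le_mul_of_nonneg_right _ (sq_nonneg _)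
        have hcol : ∑ m, |M m k| = ∑ m, |M k m| :=
          Finset.sum_congr rfl fun m _ => by rw [hMsymm m k]
        rw [hcol]
        exact hrow k
    _ = C ^ 2 * ∑ k, (x k) ^ 2 := by rw [← Finset.mul_sum]; ring
  have hfin := Real.sqrt_le_sqrt htotal
  rw [Real.sqrt_mul (sq_nonneg C), Real.sqrt_sq hC0] at hfin
  exact hfin
end

section
/- In the special case r = 0 (exact sparsity: max_m Σ_k 1{σ_{mk} ≠ 0} ≤ ζ_p) with β = 1: if max_{m,k}|ŝ_{mk} - σ_{mk}| ≤ τ, then the thresholded estimator Σ̂(τ) = {ŝ_{mk} 1{|ŝ_{mk}| > τ}} satisfies ‖Σ̂(τ) - Σ‖₂ ≤ 6 ζ_p τ and p⁻¹|Σ̂(τ) - Σ|_F² ≤ 18 ζ_p τ², where |·|_F is the Frobenius norm. -/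
open Matrix

/-- Exact sparsity case (`r = 0`, `β = 1`): if each row of the symmetric matrix `Σ` has at
most `ζ` nonzero entries and `max_{m,k}|ŝ_{mk}-σ_{mk}| ≤ τ`, then the thresholded
estimator `Σ̂(τ) = {ŝ_{mk} 1{|ŝ_{mk}| > τ}}` satisfies `‖Σ̂(τ) - Σ‖₂ ≤ 6ζτ` (spectral
norm, expressed via the Euclidean operator bound) and `p⁻¹|Σ̂(τ) - Σ|_F² ≤ 18ζτ²`. -/
theorem stmt13 {p : ℕ} (hp : 0 < p) (Sig Shat : Matrix (Fin p) (Fin p) ℝ)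
    (hSig : Sig.IsSymm) (hShat : Shat.IsSymm)
    (ζ τ : ℝ) (hτ : 0 ≤ τ)
    (hsparse : ∀ m, ((Finset.univ.filter (fun k => Sig m k ≠ 0)).card : ℝ) ≤ ζ)
    (hclose : ∀ m k, |Shat m k - Sig m k| ≤ τ) :
    (∀ x : Fin p → ℝ,
      Real.sqrt (∑ m, (((Matrix.of fun m k => if τ < |Shat m k| then Shat m k else 0)
          - Sig).mulVec x m) ^ 2)
        ≤ 6 * ζ * τ * Real.sqrt (∑ k, (x k) ^ 2)) ∧
    (∑ m, ∑ k, ((if τ < |Shat m k| then Shat m k else 0) - Sig m k) ^ 2) / (p : ℝ)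
      ≤ 18 * ζ * τ ^ 2 := by
  set D : Fin p → Fin p → ℝ :=
    fun m k => (if τ < |Shat m k| then Shat m k else 0) - Sig m k with hDdef
  have hζ : 0 ≤ ζ := le_trans (by positivity) (hsparse ⟨0, hp⟩)
  have hD0 : ∀ m k, Sig m k = 0 → D m k = 0 := by
    intro m k h
    have h1 : |Shat m k| ≤ τ := by
      have := hclose m k; rw [h] at this; simpa using this
    simp [hDdef, h, not_lt.mpr h1]
  have hDle : ∀ m k, |D m k| ≤ 2 * τ := by
    intro m k
    by_cases h : τ < |Shat m k|
    · simp only [hDdef, if_pos h]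
      calc |Shat m k - Sig m k| ≤ τ := hclose m k
        _ ≤ 2 * τ := by linarith
    · simp only [hDdef, if_neg h, zero_sub, abs_neg]
      push_neg at h
      calc |Sig m k| = |(Sig m k - Shat m k) + Shat m k| := by ring_nf
        _ ≤ |Sig m k - Shat m k| + |Shat m k| := abs_add_le _ _
        _ ≤ τ + τ := by
            refine add_le_add ?_ h
            rw [abs_sub_comm]; exact hclose m k
        _ = 2 * τ := by ring
  have hDsymm : ∀ m k, D m k = D k m := by
    intro m k
    have h1 : Shat m k = Shat k m := by
      conv_lhs => rw [← hShat]
      rfl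
    have h2 : Sig m k = Sig k m := by
      conv_lhs => rw [← hSig]
      rfl
    simp [hDdef, h1, h2]
  -- row sums of powers
  have hrowpow : ∀ (m : Fin p) (f : ℝ → ℝ), (∀ y, 0 ≤ y → y ≤ 2 * τ → f y ≤ f (2 * τ)) →
      f 0 = 0 → 0 ≤ f (2 * τ) → (∑ k, f |D m k|) ≤ ζ * f (2 * τ) := by
    intro m f hmono hf0 hfpos
    have hsub : (∑ k, f |D m k|)
        = ∑ k ∈ Finset.univ.filter (fun k => Sig m k ≠ 0), f |D m k| := by
      refine (Finset.sum_subset (Finset.filter_subset _ _) ?_).symm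
      intro k _ hk
      simp only [Finset.mem_filter, Finset.mem_univ, true_and, not_not] at hk
      rw [hD0 m k hk]; simp [hf0]
    rw [hsub]
    calc ∑ k ∈ Finset.univ.filter (fun k => Sig m k ≠ 0), f |D m k|
        ≤ ∑ _k ∈ Finset.univ.filter (fun k => Sig m k ≠ 0), f (2 * τ) := by
          refine Finset.sum_le_sum fun k _ => hmono _ (abs_nonneg _) (hDle m k)
      _ = ((Finset.univ.filter (fun k => Sig m k ≠ 0)).card : ℝ) * f (2 * τ) := by
          rw [Finset.sum_const, nsmul_eq_mul]
      _ ≤ ζ * f (2 * τ) := by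
          exact mul_le_mul_of_nonneg_right (hsparse m) hfpos
  have hrow : ∀ m, (∑ k, |D m k|) ≤ 2 * ζ * τ := by
    intro m
    have := hrowpow m id (fun y _ h => h) rfl (by simp only [id]; positivity)
    simpa [mul_comm, mul_assoc, mul_left_comm] using this
  have hcol : ∀ k, (∑ m, |D m k|) ≤ 2 * ζ * τ := by
    intro k
    calc (∑ m, |D m k|) = ∑ m, |D k m| := by
          refine Finset.sum_congr rfl fun m _ => by rw [hDsymm]
      _ ≤ 2 * ζ * τ := hrow k
  constructor
  · intro x
    have hmv : ∀ m, ((Matrix.of fun m k => if τ < |Shat m k| then Shat m k else 0)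
        - Sig).mulVec x m = ∑ k, D m k * x k := by
      intro m
      simp [Matrix.mulVec, dotProduct, Matrix.sub_apply, hDdef, sub_mul]
    have key : (∑ m, (∑ k, D m k * x k) ^ 2) ≤ (2 * ζ * τ) ^ 2 * ∑ k, (x k) ^ 2 := by
      have step1 : ∀ m, (∑ k, D m k * x k) ^ 2
          ≤ (∑ k, |D m k|) * ∑ k, |D m k| * (x k) ^ 2 := by
        intro m
        calc (∑ k, D m k * x k) ^ 2 ≤ (∑ k, |D m k * x k|) ^ 2 := by
              have h1 : |∑ k, D m k * x k| ≤ ∑ k, |D m k * x k| :=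
                Finset.abs_sum_le_sum_abs _ _
              calc (∑ k, D m k * x k) ^ 2 = |∑ k, D m k * x k| ^ 2 := (sq_abs _).symm
                _ ≤ (∑ k, |D m k * x k|) ^ 2 := by
                    exact pow_le_pow_left₀ (abs_nonneg _) h1 2
          _ ≤ (∑ k, |D m k|) * ∑ k, |D m k| * (x k) ^ 2 := by
              refine Finset.sum_sq_le_sum_mul_sum_of_sq_eq_mul _
                (fun k _ => abs_nonneg _)
                (fun k _ => mul_nonneg (abs_nonneg _) (sq_nonneg _))
                (fun k _ => ?_)
              rw [abs_mul, mul_pow, sq_abs (x k)]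
              ring
      calc (∑ m, (∑ k, D m k * x k) ^ 2)
          ≤ ∑ m, (∑ k, |D m k|) * ∑ k, |D m k| * (x k) ^ 2 :=
            Finset.sum_le_sum fun m _ => step1 m
        _ ≤ ∑ m, (2 * ζ * τ) * ∑ k, |D m k| * (x k) ^ 2 := by
            refine Finset.sum_le_sum fun m _ => ?_
            refine mul_le_mul_of_nonneg_right (hrow m) ?_
            exact Finset.sum_nonneg fun k _ => mul_nonneg (abs_nonneg _) (sq_nonneg _)
        _ = (2 * ζ * τ) * ∑ k, (∑ m, |D m k|) * (x k) ^ 2 := by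
            rw [← Finset.mul_sum]
            congr 1
            rw [Finset.sum_comm]
            exact Finset.sum_congr rfl fun k _ => (Finset.sum_mul _ _ _).symm
        _ ≤ (2 * ζ * τ) * ∑ k, (2 * ζ * τ) * (x k) ^ 2 := by
            refine mul_le_mul_of_nonneg_left ?_ (by positivity)
            exact Finset.sum_le_sum fun k _ =>
              mul_le_mul_of_nonneg_right (hcol k) (sq_nonneg _)
        _ = (2 * ζ * τ) ^ 2 * ∑ k, (x k) ^ 2 := by
            rw [← Finset.mul_sum]; ring
    calc Real.sqrt (∑ m, (((Matrix.of fun m k => if τ < |Shat m k| then Shat m k else 0)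
            - Sig).mulVec x m) ^ 2)
        = Real.sqrt (∑ m, (∑ k, D m k * x k) ^ 2) := by
          exact congrArg Real.sqrt (Finset.sum_congr rfl fun m _ => by rw [hmv])
      _ ≤ Real.sqrt ((2 * ζ * τ) ^ 2 * ∑ k, (x k) ^ 2) := Real.sqrt_le_sqrt key
      _ = (2 * ζ * τ) * Real.sqrt (∑ k, (x k) ^ 2) := by
          rw [Real.sqrt_mul (sq_nonneg _), Real.sqrt_sq (by positivity)]
      _ ≤ 6 * ζ * τ * Real.sqrt (∑ k, (x k) ^ 2) := by
          have hx : 0 ≤ Real.sqrt (∑ k, (x k) ^ 2) := Real.sqrt_nonneg _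
          nlinarith [mul_nonneg (mul_nonneg hζ hτ) hx]
  · have hFrob : (∑ m, ∑ k, ((if τ < |Shat m k| then Shat m k else 0) - Sig m k) ^ 2)
        ≤ (p : ℝ) * (ζ * (2 * τ) ^ 2) := by
      calc (∑ m, ∑ k, ((if τ < |Shat m k| then Shat m k else 0) - Sig m k) ^ 2)
          = ∑ m, ∑ k, |D m k| ^ 2 := by
            refine Finset.sum_congr rfl fun m _ => Finset.sum_congr rfl fun k _ => ?_
            rw [sq_abs]
        _ ≤ ∑ _m : Fin p, ζ * (2 * τ) ^ 2 := by
            refine Finset.sum_le_sum fun m _ => ?_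
            exact hrowpow m (fun y => y ^ 2)
              (fun y hy h => pow_le_pow_left₀ hy h 2) (by norm_num) (by positivity)
        _ = (p : ℝ) * (ζ * (2 * τ) ^ 2) := by
            rw [Finset.sum_const, nsmul_eq_mul, Finset.card_univ, Fintype.card_fin]
    have hp' : (0 : ℝ) < p := by exact_mod_cast hp
    rw [div_le_iff₀ hp']
    calc (∑ m, ∑ k, ((if τ < |Shat m k| then Shat m k else 0) - Sig m k) ^ 2)
        ≤ (p : ℝ) * (ζ * (2 * τ) ^ 2) := hFrob
      _ ≤ 18 * ζ * τ ^ 2 * (p : ℝ) := by nlinarith [sq_nonneg τ, mul_nonneg hζ (sq_nonneg τ)]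
end
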